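/- arXiv:1706.07395 — 6 statements merged into one kernel-verified Lean document; each statement's English description precedes it below -/
import Mathlib

section
/- Let T > 0 and ρ > 0 with ρT not an integer multiple of 2π. Then for every t ∈ [0,T], ∫₀ᵀ G_P⁺(t,s) ds = ∫₀ᵀ G_P⁺(0,s) ds and ∫₀ᵀ G_P⁻(t,s) ds = ∫₀ᵀ G_P⁻(0,s) ds; in particular, the ratio (∫₀ᵀ G_P⁺(t,s) ds)/(∫₀ᵀ G_P⁻(t,s) ds) is the same for all t ∈ [0,T] whenever the denominator is nonzero. -/
open Real Set intervalIntegral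

/-- The Green's function of the periodic problem `u'' + ρ²u = 0`,
`u(0) = u(T)`, `u'(0) = u'(T)`. -/
noncomputable def GreenP (T ρ t s : ℝ) : ℝ :=
  if s ≤ t then (sin (ρ * (t - s)) + sin (ρ * (T - t + s))) / (2 * ρ * (1 - cos (ρ * T)))
  else (sin (ρ * (s - t)) + sin (ρ * (T - s + t))) / (2 * ρ * (1 - cos (ρ * T)))

/-- Positive part of the periodic Green's function. -/
noncomputable def GreenPpos (T ρ t s : ℝ) : ℝ := max (GreenP T ρ t s) 0

/-- Negative part of the periodic Green's function. -/
noncomputable def GreenPneg (T ρ t s : ℝ) : ℝ := max (-(GreenP T ρ t s)) 0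

/-!
For `t, s ∈ [0, T]` the Green's function depends only on `t - s` modulo `T`: it is
`G_P(t, s) = g((t - s) mod T)` with `g(y) = (sin ρy + sin ρ(T - y)) / (2ρ(1 - cos ρT))`, and the
only wrap-around case `t - s = T` is harmless because `g(T) = g(0)`. Hence `s ↦ φ(G_P(t, s))` is a
translate of a `T`-periodic function, and its integral over a period does not depend on `t`.
-/

theorem Function.Periodic.intervalIntegral_comp_sub_left {E : Type*} [NormedAddCommGroup E]
    [NormedSpace ℝ E] {g : ℝ → E} {c : ℝ}
    (hg : Function.Periodic g c) (t : ℝ) :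
    ∫ s in (0 : ℝ)..c, g (t - s) = ∫ x in (0 : ℝ)..c, g x := by
  have hshift := hg.intervalIntegral_add_eq (t - c) 0
  rw [sub_add_cancel, zero_add] at hshift
  rw [intervalIntegral.integral_comp_sub_left g t, sub_zero, hshift]

noncomputable def greenProfile (T ρ y : ℝ) : ℝ :=
  (sin (ρ * y) + sin (ρ * (T - y))) / (2 * ρ * (1 - cos (ρ * T)))

lemma greenProfile_sub_left (T ρ y : ℝ) : greenProfile T ρ (T - y) = greenProfile T ρ y := by
  rw [greenProfile, greenProfile, sub_sub_cancel, add_comm]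

lemma GreenP_eq_greenProfile_toIcoMod {T ρ t s : ℝ} (hT : 0 < T) (ht : t ∈ Icc 0 T)
    (hs : s ∈ Icc 0 T) : GreenP T ρ t s = greenProfile T ρ (toIcoMod hT 0 (t - s)) := by
  obtain ⟨ht0, htT⟩ := ht
  obtain ⟨hs0, hsT⟩ := hs
  rw [GreenP]
  split_ifs with hst
  · rcases (show t - s ≤ T by linarith).lt_or_eq with hlt | heq
    · rw [(toIcoMod_eq_self hT).2 ⟨by linarith, by linarith⟩, greenProfile]
      ring_nf
    · have hwrap : toIcoMod hT 0 T = 0 := by simpa using toIcoMod_apply_right hT (0 : ℝ)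
      rw [heq, show T - t + s = 0 by linarith, hwrap, greenProfile, add_comm]
      simp
  · rw [← toIcoMod_add_right, (toIcoMod_eq_self hT).2 ⟨by linarith, by linarith⟩,
      ← greenProfile_sub_left, greenProfile]
    ring_nf

theorem intervalIntegral_comp_GreenP_eq (T ρ : ℝ) (hT : 0 < T) (φ : ℝ → ℝ) {t : ℝ}
    (ht : t ∈ Icc 0 T) :
    ∫ s in (0 : ℝ)..T, φ (GreenP T ρ t s) = ∫ s in (0 : ℝ)..T, φ (GreenP T ρ 0 s) := by
  have hper : Function.Periodic (fun x => φ (greenProfile T ρ (toIcoMod hT 0 x))) T :=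
    (toIcoMod_periodic hT 0).comp fun y => φ (greenProfile T ρ y)
  have hreduce : ∀ t ∈ Icc 0 T, ∫ s in (0 : ℝ)..T, φ (GreenP T ρ t s) =
      ∫ x in (0 : ℝ)..T, φ (greenProfile T ρ (toIcoMod hT 0 x)) := fun u hu => by
    rw [← hper.intervalIntegral_comp_sub_left u]
    refine integral_congr fun s hs => ?_
    rw [uIcc_of_le hT.le] at hs
    simp only [GreenP_eq_greenProfile_toIcoMod hT hu hs]
  rw [hreduce t ht, hreduce 0 ⟨le_rfl, hT.le⟩]

theorem periodic_green_parts_integral_const_general (T ρ : ℝ) (hT : 0 < T) :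
    (∀ t ∈ Icc 0 T,
      (∫ s in (0 : ℝ)..T, GreenPpos T ρ t s) = ∫ s in (0 : ℝ)..T, GreenPpos T ρ 0 s) ∧
    (∀ t ∈ Icc 0 T,
      (∫ s in (0 : ℝ)..T, GreenPneg T ρ t s) = ∫ s in (0 : ℝ)..T, GreenPneg T ρ 0 s) ∧
    (∀ t₁ ∈ Icc 0 T, ∀ t₂ ∈ Icc 0 T,
      (∫ s in (0 : ℝ)..T, GreenPneg T ρ t₁ s) ≠ 0 →
      (∫ s in (0 : ℝ)..T, GreenPneg T ρ t₂ s) ≠ 0 →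
      (∫ s in (0 : ℝ)..T, GreenPpos T ρ t₁ s) / (∫ s in (0 : ℝ)..T, GreenPneg T ρ t₁ s) =
      (∫ s in (0 : ℝ)..T, GreenPpos T ρ t₂ s) / (∫ s in (0 : ℝ)..T, GreenPneg T ρ t₂ s)) := by
  have hpos : ∀ t ∈ Icc 0 T,
      (∫ s in (0 : ℝ)..T, GreenPpos T ρ t s) = ∫ s in (0 : ℝ)..T, GreenPpos T ρ 0 s :=
    fun t => intervalIntegral_comp_GreenP_eq T ρ hT (max · 0)
  have hneg : ∀ t ∈ Icc 0 T,
      (∫ s in (0 : ℝ)..T, GreenPneg T ρ t s) = ∫ s in (0 : ℝ)..T, GreenPneg T ρ 0 s :=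
    fun t => intervalIntegral_comp_GreenP_eq T ρ hT (max (-·) 0)
  refine ⟨hpos, hneg, fun t₁ ht₁ t₂ ht₂ _ _ => ?_⟩
  rw [hpos t₁ ht₁, hneg t₁ ht₁, hpos t₂ ht₂, hneg t₂ ht₂]

theorem periodic_green_parts_integral_const (T ρ : ℝ) (hT : 0 < T) (hρ : 0 < ρ)
    (hres : ∀ n : ℤ, ρ * T ≠ 2 * n * π) :
    (∀ t ∈ Icc 0 T,
      (∫ s in (0 : ℝ)..T, GreenPpos T ρ t s) = ∫ s in (0 : ℝ)..T, GreenPpos T ρ 0 s) ∧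
    (∀ t ∈ Icc 0 T,
      (∫ s in (0 : ℝ)..T, GreenPneg T ρ t s) = ∫ s in (0 : ℝ)..T, GreenPneg T ρ 0 s) ∧
    (∀ t₁ ∈ Icc 0 T, ∀ t₂ ∈ Icc 0 T,
      (∫ s in (0 : ℝ)..T, GreenPneg T ρ t₁ s) ≠ 0 →
      (∫ s in (0 : ℝ)..T, GreenPneg T ρ t₂ s) ≠ 0 →
      (∫ s in (0 : ℝ)..T, GreenPpos T ρ t₁ s) / (∫ s in (0 : ℝ)..T, GreenPneg T ρ t₁ s) =
      (∫ s in (0 : ℝ)..T, GreenPpos T ρ t₂ s) / (∫ s in (0 : ℝ)..T, GreenPneg T ρ t₂ s)) :=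
  periodic_green_parts_integral_const_general T ρ hT
end

section
/- Let T > 0 and ρ > 0 with ρT not an integer multiple of 2π. Then G_P(t,s) ≥ 0 for all (t,s) ∈ [0,T] × [0,T] if and only if ρT ≤ π. Moreover, if ρT > π (and ρT is not an integer multiple of 2π), then there exist points (t₁,s₁), (t₂,s₂) ∈ [0,T] × [0,T] with G_P(t₁,s₁) > 0 and G_P(t₂,s₂) < 0. -/
/-!
Writing `L = ρT` and `x = ρ|t - s| ∈ [0, L]`, the sum-to-product formula turns the numerator into
`2 sin (L/2) cos (x - L/2)`, while the denominator `2ρ(1 - cos L) = 4ρ sin² (L/2)` is positive.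
If `L ≤ π`, then `sin (L/2) > 0` and `|x - L/2| ≤ π/2`, so `G_P ≥ 0`. If `L > π`, then along
`s = 0` the cosine factor equals `1` at `t = T/2` and becomes negative once `x - L/2` passes `π/2`,
while `sin (L/2) ≠ 0`: so `G_P` takes both signs.
-/

open Real Set

theorem Real.sin_add_sin_sub (L x : ℝ) :
    sin x + sin (L - x) = 2 * sin (L / 2) * cos (x - L / 2) := by
  rw [sin_add_sin]
  congr 3 <;> ring

theorem Real.sin_half_ne_zero {x : ℝ} (hx : ∀ n : ℤ, x ≠ 2 * n * π) : sin (x / 2) ≠ 0 := by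
  rw [Ne, sin_eq_zero_iff]
  rintro ⟨n, hn⟩
  exact hx n (by linarith)

theorem Real.one_sub_cos_pos {x : ℝ} (hx : sin (x / 2) ≠ 0) : 0 < 1 - cos x := by
  have h := sin_sq_eq_half_sub (x / 2)
  rw [mul_div_cancel₀ x two_ne_zero] at h
  linarith [sq_pos_of_ne_zero hx]

theorem greenP_eq (T ρ t s : ℝ) :
    GreenP T ρ t s = sin (ρ * T / 2) * cos (ρ * |t - s| - ρ * T / 2) / (ρ * (1 - cos (ρ * T))) := by
  have closed_form : ∀ x, (sin x + sin (ρ * T - x)) / (2 * ρ * (1 - cos (ρ * T))) =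
      sin (ρ * T / 2) * cos (x - ρ * T / 2) / (ρ * (1 - cos (ρ * T))) := fun x => by
    rw [sin_add_sin_sub, mul_assoc 2 ρ, mul_assoc, mul_div_mul_left _ _ two_ne_zero]
  unfold GreenP
  split_ifs with hst
  · rw [abs_of_nonneg (sub_nonneg.2 hst), ← closed_form]
    ring_nf
  · rw [abs_of_neg (sub_neg.2 (not_le.1 hst)), ← closed_form]
    ring_nf

theorem greenP_right_zero (T ρ : ℝ) {t : ℝ} (ht : 0 ≤ t) :
    GreenP T ρ t 0 = sin (ρ * T / 2) * cos (ρ * t - ρ * T / 2) / (ρ * (1 - cos (ρ * T))) := by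
  rw [greenP_eq, sub_zero, abs_of_nonneg ht]

theorem greenP_nonneg {T ρ : ℝ} (hT : 0 < T) (hρ : 0 < ρ) (hπ : ρ * T ≤ π) {t s : ℝ}
    (ht : t ∈ Icc 0 T) (hs : s ∈ Icc 0 T) : 0 ≤ GreenP T ρ t s := by
  have hsin : 0 < sin (ρ * T / 2) :=
    sin_pos_of_pos_of_lt_pi (by positivity) (by linarith [pi_pos])
  have hdist : |t - s| ≤ T := abs_sub_le_iff.2 ⟨by linarith [ht.2, hs.1], by linarith [ht.1, hs.2]⟩
  have hcos : 0 ≤ cos (ρ * |t - s| - ρ * T / 2) := by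
    apply cos_nonneg_of_mem_Icc
    constructor <;> nlinarith [abs_nonneg (t - s)]
  rw [greenP_eq]
  have := one_sub_cos_pos hsin.ne'
  positivity

theorem exists_mem_Icc_cos_sub_half_neg {L : ℝ} (hL : π < L) :
    ∃ x ∈ Icc 0 L, cos (x - L / 2) < 0 := by
  have hm : π / 2 < min (L / 2) π := lt_min (by linarith) (by linarith [pi_pos])
  refine ⟨L / 2 + min (L / 2) π, ⟨by linarith [pi_pos], by linarith [min_le_left (L / 2) π]⟩, ?_⟩
  rw [add_sub_cancel_left]
  exact cos_neg_of_pi_div_two_lt_of_lt hm (by linarith [min_le_right (L / 2) π, pi_pos])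

theorem greenP_exists_pos_and_neg {T ρ : ℝ} (hT : 0 < T) (hρ : 0 < ρ)
    (hres : ∀ n : ℤ, ρ * T ≠ 2 * n * π) (hπ : π < ρ * T) :
    (∃ t ∈ Icc 0 T, ∃ s ∈ Icc 0 T, 0 < GreenP T ρ t s) ∧
      (∃ t ∈ Icc 0 T, ∃ s ∈ Icc 0 T, GreenP T ρ t s < 0) := by
  have hsin := sin_half_ne_zero hres
  have hden : 0 < ρ * (1 - cos (ρ * T)) := mul_pos hρ (one_sub_cos_pos hsin)
  have hzero : (0 : ℝ) ∈ Icc 0 T := ⟨le_rfl, hT.le⟩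
  have hmid : T / 2 ∈ Icc 0 T := ⟨by positivity, by linarith⟩
  have hval_mid : GreenP T ρ (T / 2) 0 = sin (ρ * T / 2) / (ρ * (1 - cos (ρ * T))) := by
    rw [greenP_right_zero T ρ hmid.1, mul_div_assoc', sub_self, cos_zero, mul_one]
  obtain ⟨x, ⟨hx0, hxL⟩, hcos⟩ := exists_mem_Icc_cos_sub_half_neg hπ
  have hneg : x / ρ ∈ Icc 0 T :=
    ⟨div_nonneg hx0 hρ.le, (div_le_iff₀ hρ).2 (by linarith)⟩
  have hval_neg : GreenP T ρ (x / ρ) 0 =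
      sin (ρ * T / 2) * cos (x - ρ * T / 2) / (ρ * (1 - cos (ρ * T))) := by
    rw [greenP_right_zero T ρ hneg.1, mul_div_cancel₀ x hρ.ne']
  rcases hsin.lt_or_gt with hsin_neg | hsin_pos
  · refine ⟨⟨x / ρ, hneg, 0, hzero, ?_⟩, ⟨T / 2, hmid, 0, hzero, ?_⟩⟩
    · rw [hval_neg]; exact div_pos (mul_pos_of_neg_of_neg hsin_neg hcos) hden
    · rw [hval_mid]; exact div_neg_of_neg_of_pos hsin_neg hden
  · refine ⟨⟨T / 2, hmid, 0, hzero, ?_⟩, ⟨x / ρ, hneg, 0, hzero, ?_⟩⟩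
    · rw [hval_mid]; exact div_pos hsin_pos hden
    · rw [hval_neg]; exact div_neg_of_neg_of_pos (mul_neg_of_pos_of_neg hsin_pos hcos) hden

theorem periodic_green_sign (T ρ : ℝ) (hT : 0 < T) (hρ : 0 < ρ)
    (hres : ∀ n : ℤ, ρ * T ≠ 2 * n * π) :
    ((∀ t ∈ Icc 0 T, ∀ s ∈ Icc 0 T, 0 ≤ GreenP T ρ t s) ↔ ρ * T ≤ π) ∧
    (π < ρ * T →
      (∃ t₁ ∈ Icc 0 T, ∃ s₁ ∈ Icc 0 T, 0 < GreenP T ρ t₁ s₁) ∧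
      (∃ t₂ ∈ Icc 0 T, ∃ s₂ ∈ Icc 0 T, GreenP T ρ t₂ s₂ < 0)) := by
  refine ⟨⟨fun hnonneg => ?_, fun hπ t ht s hs => greenP_nonneg hT hρ hπ ht hs⟩,
    greenP_exists_pos_and_neg hT hρ hres⟩
  by_contra hπ
  obtain ⟨-, t, ht, s, hs, hneg⟩ := greenP_exists_pos_and_neg hT hρ hres (not_le.1 hπ)
  exact (hnonneg t ht s hs).not_gt hneg
end

section
/- Let T > 0 and k be a nonnegative integer. (i) If (4k+1)π/T < ρ < (4k+2)π/T, then (∫₀ᵀ G_P⁺(0,s) ds)/(∫₀ᵀ G_P⁻(0,s) ds) = (2k+1)/(2k+1−sin(ρT/2)). (ii) If (4k+2)π/T < ρ < (4k+3)π/T, then (∫₀ᵀ G_P⁺(0,s) ds)/(∫₀ᵀ G_P⁻(0,s) ds) = (2k+1−sin(ρT/2))/(2k+1). -/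
open Real Set intervalIntegral

/-!
On `[0, T]` the sum-to-product formula gives `G_P(0, s) = cos (ρ s - ρT/2) / (2ρ sin (ρT/2))`,
so the positive and negative parts of `G_P(0, ·)` are, up to the factor `|2ρ sin (ρT/2)|⁻¹`, the
positive and negative parts of `cos` over the symmetric interval `[-ρT/2, ρT/2]`, swapped according
to the sign of `sin (ρT/2)`. When `ρT/2` lies in `[2πk + π/2, 2πk + 3π/2]` the positive part of
`cos` integrates to `2k + 1` over `[0, ρT/2]`: `k` full periods contribute `2` each and the last
arch contributes `1`. The negative part differs from the positive part by `cos`, whose integral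
over `[0, ρT/2]` is `sin (ρT/2)`.
-/

lemma intervalIntegrable_max_cos_zero (a b : ℝ) :
    IntervalIntegrable (fun u => max (cos u) 0) MeasureTheory.volume a b :=
  (continuous_cos.max continuous_const).intervalIntegrable a b

lemma periodic_max_cos_zero : Function.Periodic (fun u => max (cos u) 0) (2 * π) :=
  cos_periodic.comp fun x => max x 0

lemma integral_max_cos_zero_neg_self (θ : ℝ) :
    ∫ u in -θ..θ, max (cos u) 0 = 2 * ∫ u in 0..θ, max (cos u) 0 := by
  have hneg : ∫ u in -θ..0, max (cos u) 0 = ∫ u in 0..θ, max (cos u) 0 := by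
    simpa using (integral_comp_neg (a := 0) (b := θ) fun u => max (cos u) 0).symm
  rw [← integral_add_adjacent_intervals (intervalIntegrable_max_cos_zero _ 0)
    (intervalIntegrable_max_cos_zero 0 _), hneg]
  ring

lemma integral_max_cos_zero_of_mem_Icc {φ : ℝ} (hφ : φ ∈ Icc (π / 2) (3 * π / 2)) :
    ∫ u in 0..φ, max (cos u) 0 = 1 := by
  have hcos : EqOn (fun u => max (cos u) 0) cos (uIcc 0 (π / 2)) := by
    intro u hu
    rw [uIcc_of_le (by positivity)] at hu
    exact max_eq_left (cos_nonneg_of_mem_Icc ⟨by linarith [hu.1, pi_pos], hu.2⟩)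
  have hzero : EqOn (fun u => max (cos u) 0) 0 (uIcc (π / 2) φ) := by
    intro u hu
    rw [uIcc_of_le hφ.1] at hu
    exact max_eq_right (cos_nonpos_of_pi_div_two_le_of_le hu.1 (by linarith [hu.2, hφ.2]))
  rw [← integral_add_adjacent_intervals (intervalIntegrable_max_cos_zero 0 (π / 2))
    (intervalIntegrable_max_cos_zero _ φ), integral_congr hcos, integral_congr hzero]
  simp

lemma integral_max_cos_zero_two_pi : ∫ u in 0..2 * π, max (cos u) 0 = 2 := by
  have h := periodic_max_cos_zero.intervalIntegral_add_eq 0 (-π)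
  rw [zero_add, show -π + 2 * π = π by ring, integral_max_cos_zero_neg_self,
    integral_max_cos_zero_of_mem_Icc (φ := π) ⟨by linarith [pi_pos], by linarith [pi_pos]⟩] at h
  linarith

lemma integral_max_cos_zero_eq {k : ℕ} {θ : ℝ}
    (hθ : θ ∈ Icc (2 * π * k + π / 2) (2 * π * k + 3 * π / 2)) :
    ∫ u in 0..θ, max (cos u) 0 = 2 * k + 1 := by
  have hperiods : ∫ u in 0..2 * π * k, max (cos u) 0 = 2 * k := by
    have h := periodic_max_cos_zero.intervalIntegral_add_zsmul_eq k 0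
      intervalIntegrable_max_cos_zero
    rw [zero_add, zero_add, integral_max_cos_zero_two_pi, zsmul_eq_mul, zsmul_eq_mul] at h
    simpa [mul_comm] using h
  have hshift : ∫ u in 2 * π * k..θ, max (cos u) 0 = ∫ u in 0..θ - 2 * π * k, max (cos u) 0 := by
    have h := integral_comp_add_right (a := 0) (b := θ - 2 * π * k)
      (fun u => max (cos u) 0) (2 * π * k)
    rw [zero_add, sub_add_cancel] at h
    rw [← h]
    exact integral_congr fun u _ => by simpa [mul_comm] using periodic_max_cos_zero.nat_mul k u
  rw [← integral_add_adjacent_intervals (intervalIntegrable_max_cos_zero 0 (2 * π * k))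
    (intervalIntegrable_max_cos_zero _ θ), hperiods, hshift,
    integral_max_cos_zero_of_mem_Icc ⟨by linarith [hθ.1], by linarith [hθ.2]⟩]

lemma integral_max_cos_mul_sub {ρ : ℝ} (hρ : ρ ≠ 0) (T : ℝ) :
    ∫ s in 0..T, max (cos (ρ * s - ρ * T / 2)) 0 = 2 / ρ * ∫ u in 0..ρ * T / 2, max (cos u) 0 := by
  rw [integral_comp_mul_sub (fun u => max (cos u) 0) hρ, mul_zero, zero_sub,
    show ρ * T - ρ * T / 2 = ρ * T / 2 by ring, integral_max_cos_zero_neg_self, smul_eq_mul]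
  ring

lemma integral_max_neg_cos_mul_sub {ρ : ℝ} (hρ : ρ ≠ 0) (T : ℝ) :
    ∫ s in 0..T, max (-cos (ρ * s - ρ * T / 2)) 0 =
      2 / ρ * ((∫ u in 0..ρ * T / 2, max (cos u) 0) - sin (ρ * T / 2)) := by
  have hneg : ∀ x : ℝ, max (-x) 0 = max x 0 - x := fun x => by
    rw [← max_sub_sub_right, sub_self, zero_sub, max_comm]
  have hcont : Continuous fun s => cos (ρ * s - ρ * T / 2) := by fun_prop
  simp only [hneg]
  rw [integral_sub ((hcont.max continuous_const).intervalIntegrable 0 T)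
      (hcont.intervalIntegrable 0 T), integral_max_cos_mul_sub hρ,
    integral_comp_mul_sub cos hρ, integral_cos, mul_zero, zero_sub, sin_neg,
    show ρ * T - ρ * T / 2 = ρ * T / 2 by ring, smul_eq_mul]
  ring

lemma integral_max_const_mul_div_integral_max_neg_const_mul {f : ℝ → ℝ} {a b c : ℝ} (hc : 0 < c) :
    (∫ s in a..b, max (c * f s) 0) / (∫ s in a..b, max (-(c * f s)) 0) =
      (∫ s in a..b, max (f s) 0) / (∫ s in a..b, max (-f s) 0) := by
  have hmul : ∀ x, max (c * x) 0 = c * max x 0 := fun x => by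
    rw [mul_max_of_nonneg _ _ hc.le, mul_zero]
  simp only [← mul_neg, hmul, integral_const_mul]
  exact mul_div_mul_left _ _ hc.ne'

lemma GreenP_zero_of_nonneg (T ρ : ℝ) {s : ℝ} (hs : 0 ≤ s) :
    GreenP T ρ 0 s = (2 * ρ * sin (ρ * T / 2))⁻¹ * cos (ρ * s - ρ * T / 2) := by
  have hnum : sin (ρ * s) + sin (ρ * (T - s)) = 2 * sin (ρ * T / 2) * cos (ρ * s - ρ * T / 2) := by
    rw [sin_add_sin]
    ring_nf
  have hden : 1 - cos (ρ * T) = 2 * sin (ρ * T / 2) ^ 2 := by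
    rw [show ρ * T = 2 * (ρ * T / 2) by ring, cos_two_mul', cos_sq']
    ring_nf
  have hG : GreenP T ρ 0 s = (sin (ρ * s) + sin (ρ * (T - s))) / (2 * ρ * (1 - cos (ρ * T))) := by
    unfold GreenP
    split_ifs with h
    · obtain rfl := le_antisymm h hs
      simp
    · simp only [sub_zero, add_zero]
  rw [hG, hnum, hden]
  rcases eq_or_ne (sin (ρ * T / 2)) 0 with hsin | hsin
  · simp [hsin]
  rcases eq_or_ne ρ 0 with hρ | hρ
  · simp [hρ]
  field_simp

lemma integral_GreenPpos_div_integral_GreenPneg_eq {T : ℝ} (hT : 0 ≤ T) (ρ : ℝ) :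
    (∫ s in 0..T, GreenPpos T ρ 0 s) / (∫ s in 0..T, GreenPneg T ρ 0 s) =
      (∫ s in 0..T, max ((2 * ρ * sin (ρ * T / 2))⁻¹ * cos (ρ * s - ρ * T / 2)) 0) /
        (∫ s in 0..T, max (-((2 * ρ * sin (ρ * T / 2))⁻¹ * cos (ρ * s - ρ * T / 2))) 0) := by
  have hG : ∀ s ∈ uIcc 0 T,
      GreenP T ρ 0 s = (2 * ρ * sin (ρ * T / 2))⁻¹ * cos (ρ * s - ρ * T / 2) := fun s hs =>
    GreenP_zero_of_nonneg T ρ (uIcc_of_le hT ▸ hs).1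
  unfold GreenPpos GreenPneg
  rw [integral_congr fun s hs => congrArg (max · 0) (hG s hs),
    integral_congr fun s hs => congrArg (fun x => max (-x) 0) (hG s hs)]

lemma integral_GreenPpos_div_integral_GreenPneg_of_sin_pos {T ρ : ℝ} (hT : 0 ≤ T) (hρ : 0 < ρ)
    (hsin : 0 < sin (ρ * T / 2)) :
    (∫ s in 0..T, GreenPpos T ρ 0 s) / (∫ s in 0..T, GreenPneg T ρ 0 s) =
      (∫ u in 0..ρ * T / 2, max (cos u) 0) /
        ((∫ u in 0..ρ * T / 2, max (cos u) 0) - sin (ρ * T / 2)) := by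
  rw [integral_GreenPpos_div_integral_GreenPneg_eq hT,
    integral_max_const_mul_div_integral_max_neg_const_mul (by positivity),
    integral_max_cos_mul_sub hρ.ne', integral_max_neg_cos_mul_sub hρ.ne']
  exact mul_div_mul_left _ _ (by positivity)

lemma integral_GreenPpos_div_integral_GreenPneg_of_sin_neg {T ρ : ℝ} (hT : 0 ≤ T) (hρ : 0 < ρ)
    (hsin : sin (ρ * T / 2) < 0) :
    (∫ s in 0..T, GreenPpos T ρ 0 s) / (∫ s in 0..T, GreenPneg T ρ 0 s) =
      ((∫ u in 0..ρ * T / 2, max (cos u) 0) - sin (ρ * T / 2)) /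
        (∫ u in 0..ρ * T / 2, max (cos u) 0) := by
  have hc : 0 < -(2 * ρ * sin (ρ * T / 2))⁻¹ :=
    neg_pos.2 (inv_lt_zero.2 (mul_neg_of_pos_of_neg (by positivity) hsin))
  simp only [integral_GreenPpos_div_integral_GreenPneg_eq hT,
    ← neg_mul_neg ((2 * ρ * sin (ρ * T / 2))⁻¹),
    integral_max_const_mul_div_integral_max_neg_const_mul hc, neg_neg,
    integral_max_cos_mul_sub hρ.ne', integral_max_neg_cos_mul_sub hρ.ne']
  exact mul_div_mul_left _ _ (by positivity)

theorem periodic_gamma_cases_2A_2B (T : ℝ) (hT : 0 < T) (k : ℕ) (ρ : ℝ) :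
    ((4 * k + 1) * π / T < ρ → ρ < (4 * k + 2) * π / T →
      (∫ s in (0 : ℝ)..T, GreenPpos T ρ 0 s) / (∫ s in (0 : ℝ)..T, GreenPneg T ρ 0 s) =
        (2 * k + 1) / (2 * k + 1 - sin (ρ * T / 2))) ∧
    ((4 * k + 2) * π / T < ρ → ρ < (4 * k + 3) * π / T →
      (∫ s in (0 : ℝ)..T, GreenPpos T ρ 0 s) / (∫ s in (0 : ℝ)..T, GreenPneg T ρ 0 s) =
        (2 * k + 1 - sin (ρ * T / 2)) / (2 * k + 1)) := by
  have hpi := pi_pos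
  refine ⟨fun hlo hhi => ?_, fun hlo hhi => ?_⟩
  · have hρ : 0 < ρ := lt_trans (by positivity) hlo
    have hl := (div_lt_iff₀ hT).1 hlo
    have hr := (lt_div_iff₀ hT).1 hhi
    have hsin : 0 < sin (ρ * T / 2) := by
      rw [← sin_sub_nat_mul_two_pi _ k]
      exact sin_pos_of_pos_of_lt_pi (by linarith) (by linarith)
    rw [integral_GreenPpos_div_integral_GreenPneg_of_sin_pos hT.le hρ hsin,
      integral_max_cos_zero_eq (k := k) ⟨by linarith, by linarith⟩]
  · have hρ : 0 < ρ := lt_trans (by positivity) hlo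
    have hl := (div_lt_iff₀ hT).1 hlo
    have hr := (lt_div_iff₀ hT).1 hhi
    have hsin : sin (ρ * T / 2) < 0 := by
      rw [← sin_sub_nat_mul_two_pi _ (k + 1)]
      exact sin_neg_of_neg_of_neg_pi_lt (by push_cast; linarith) (by push_cast; linarith)
    rw [integral_GreenPpos_div_integral_GreenPneg_of_sin_neg hT.le hρ hsin,
      integral_max_cos_zero_eq (k := k) ⟨by linarith, by linarith⟩]
end

section
/- Let T > 0 and k be a positive integer. (i) If (4k−1)π/T < ρ < 4kπ/T, then (∫₀ᵀ G_P⁺(0,s) ds)/(∫₀ᵀ G_P⁻(0,s) ds) = 2k/(2k+sin(ρT/2)). (ii) If 4kπ/T < ρ < (4k+1)π/T, then (∫₀ᵀ G_P⁺(0,s) ds)/(∫₀ᵀ G_P⁻(0,s) ds) = (2k+sin(ρT/2))/(2k). -/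
/-!
With `θ = ρT/2`, sum-to-product gives `G_P(t,s) = cos(ρ|t-s| - θ) / (2ρ sin θ)`, so the substitution
`u = ρs - θ` turns the two integrals into a common positive factor times `∫_{-θ}^{θ} cos⁺` and
`∫_{-θ}^{θ} cos⁻`, the sign of `ρ sin θ` deciding which is which. When `|θ - 2kπ| ≤ π/2`, the interval
`[-θ, θ]` consists of `2k` periods of `cos` plus a piece on which `cos ≥ 0`, so `∫ cos⁻ = 4k` and
`∫ cos⁺ = ∫ cos⁻ + ∫ cos = 4k + 2 sin θ`. In case (i) `sin θ < 0`, in case (ii) `sin θ > 0`.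
-/

open Real Set intervalIntegral

theorem greenP_eq_cos (T ρ t s : ℝ) :
    GreenP T ρ t s = cos (ρ * |t - s| - ρ * T / 2) / (2 * ρ * sin (ρ * T / 2)) := by
  have hbranch : ∀ x, (sin (ρ * x) + sin (ρ * (T - x))) / (2 * ρ * (1 - cos (ρ * T))) =
      cos (ρ * x - ρ * T / 2) / (2 * ρ * sin (ρ * T / 2)) := by
    intro x
    have hden : 1 - cos (ρ * T) = 2 * sin (ρ * T / 2) ^ 2 := by
      rw [sin_sq_eq_half_sub]
      ring_nf
    rw [sin_add_sin, hden]
    rcases eq_or_ne (sin (ρ * T / 2)) 0 with h | h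
    · simp [h]
    · field_simp
      ring_nf
  unfold GreenP
  split_ifs with h
  · rw [abs_of_nonneg (sub_nonneg.2 h), ← hbranch, sub_add]
  · rw [abs_of_neg (sub_neg.2 (not_le.1 h)), neg_sub, ← hbranch, sub_add]

theorem integral_comp_greenP_zero (φ : ℝ → ℝ) {T ρ : ℝ} (hT : 0 ≤ T) (hρ : ρ ≠ 0) :
    ∫ s in (0 : ℝ)..T, φ (GreenP T ρ 0 s) =
      ρ⁻¹ * ∫ u in -(ρ * T / 2)..ρ * T / 2, φ (cos u / (2 * ρ * sin (ρ * T / 2))) := by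
  have hG : EqOn (fun s => φ (GreenP T ρ 0 s))
      (fun s => φ (cos (ρ * s - ρ * T / 2) / (2 * ρ * sin (ρ * T / 2)))) (uIcc 0 T) := by
    intro s hs
    rw [uIcc_of_le hT] at hs
    simp only [greenP_eq_cos, zero_sub, abs_neg, abs_of_nonneg hs.1]
  rw [integral_congr hG, integral_comp_mul_sub (fun u => φ (cos u / _)) hρ, smul_eq_mul,
    mul_zero, zero_sub, show ρ * T - ρ * T / 2 = ρ * T / 2 by ring]

theorem integral_negPart_cos_eq_zero {a b : ℝ} (h : ∀ u ∈ uIcc a b, 0 ≤ cos u) :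
    ∫ u in a..b, max (-cos u) 0 = 0 :=
  (integral_congr (g := fun _ => 0) fun u hu => max_eq_right (neg_nonpos.2 (h u hu))).trans
    integral_zero

theorem integral_negPart_cos_period : ∫ u in -(π / 2)..3 * π / 2, max (-cos u) 0 = 2 := by
  have hint : ∀ a b : ℝ, IntervalIntegrable (fun u => max (-cos u) 0) MeasureTheory.volume a b :=
    fun a b => (continuous_cos.neg.max continuous_const).intervalIntegrable a b
  have hpos : ∫ u in -(π / 2)..π / 2, max (-cos u) 0 = 0 := by
    refine integral_negPart_cos_eq_zero fun u hu => cos_nonneg_of_mem_Icc ?_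
    rwa [uIcc_of_le (by linarith [pi_pos])] at hu
  have hneg : ∫ u in π / 2..3 * π / 2, max (-cos u) 0 = 2 := by
    have hcos : EqOn (fun u => max (-cos u) 0) (fun u => -cos u) (uIcc (π / 2) (3 * π / 2)) := by
      intro u hu
      rw [uIcc_of_le (by linarith [pi_pos])] at hu
      exact max_eq_left (neg_nonneg.2 (cos_nonpos_of_pi_div_two_le_of_le hu.1 (by linarith [hu.2])))
    rw [integral_congr hcos, integral_neg, integral_cos, show 3 * π / 2 = π / 2 + π by ring,
      sin_add_pi, sin_pi_div_two]
    norm_num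
  rw [← integral_add_adjacent_intervals (hint _ (π / 2)) (hint _ _), hpos, hneg, zero_add]

theorem integral_negPart_cos_of_abs_sub_le (k : ℕ) {θ : ℝ} (hθ : |θ - 2 * k * π| ≤ π / 2) :
    ∫ u in -θ..θ, max (-cos u) 0 = 4 * k := by
  have hper : Function.Periodic (fun u => max (-cos u) 0) (2 * π) := fun u => by
    simp only [cos_add_two_pi]
  have hint : ∀ a b : ℝ, IntervalIntegrable (fun u => max (-cos u) 0) MeasureTheory.volume a b :=
    fun a b => (continuous_cos.neg.max continuous_const).intervalIntegrable a b
  have hperiods : ∫ u in -θ..-θ + (2 * k : ℤ) • (2 * π), max (-cos u) 0 = 4 * k := by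
    rw [hper.intervalIntegral_add_zsmul_eq _ _ hint, hper.intervalIntegral_add_eq _ (-(π / 2)),
      show -(π / 2) + 2 * π = 3 * π / 2 by ring, integral_negPart_cos_period]
    push_cast [zsmul_eq_mul]
    ring
  have hrest : ∫ u in -θ + (2 * k : ℤ) • (2 * π)..θ, max (-cos u) 0 = 0 := by
    refine integral_negPart_cos_eq_zero fun u hu => ?_
    rw [← cos_sub_nat_mul_two_pi u k]
    push_cast [zsmul_eq_mul] at hu
    obtain ⟨h₁, h₂⟩ := abs_le.1 hθ
    apply cos_nonneg_of_mem_Icc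
    rcases mem_uIcc.1 hu with ⟨hu₁, hu₂⟩ | ⟨hu₁, hu₂⟩ <;> constructor <;> linarith
  rw [← integral_add_adjacent_intervals (hint _ _) (hint _ _), hperiods, hrest, add_zero]

theorem integral_posPart_cos_of_abs_sub_le (k : ℕ) {θ : ℝ} (hθ : |θ - 2 * k * π| ≤ π / 2) :
    ∫ u in -θ..θ, max (cos u) 0 = 4 * k + 2 * sin θ := by
  have hdiff := integral_sub (μ := MeasureTheory.volume) (a := -θ) (b := θ)
    (f := fun u => max (cos u) 0) (g := fun u => max (-cos u) 0)
    ((continuous_cos.max continuous_const).intervalIntegrable _ _)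
    ((continuous_cos.neg.max continuous_const).intervalIntegrable _ _)
  simp only [max_zero_sub_eq_self, integral_cos, sin_neg,
    integral_negPart_cos_of_abs_sub_le k hθ] at hdiff
  linarith

theorem integral_greenPpos_div_integral_greenPneg_of_pos {T ρ : ℝ} (hT : 0 ≤ T)
    (h : 0 < ρ * sin (ρ * T / 2)) :
    (∫ s in (0 : ℝ)..T, GreenPpos T ρ 0 s) / (∫ s in (0 : ℝ)..T, GreenPneg T ρ 0 s) =
      (∫ u in -(ρ * T / 2)..ρ * T / 2, max (cos u) 0) /
        ∫ u in -(ρ * T / 2)..ρ * T / 2, max (-cos u) 0 := by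
  have hρ : ρ ≠ 0 := by rintro rfl; simp at h
  have hd : 0 < 2 * ρ * sin (ρ * T / 2) := by linarith
  have hmax : ∀ x, max (x / (2 * ρ * sin (ρ * T / 2))) 0 =
      max x 0 / (2 * ρ * sin (ρ * T / 2)) := fun x => by
    rw [← max_div_div_right hd.le, zero_div]
  unfold GreenPpos GreenPneg
  rw [integral_comp_greenP_zero (fun x => max x 0) hT hρ,
    integral_comp_greenP_zero (fun x => max (-x) 0) hT hρ]
  simp only [← neg_div, hmax, integral_div]
  rw [mul_div_mul_left _ _ (inv_ne_zero hρ), div_div_div_cancel_right₀ hd.ne']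

theorem integral_greenPpos_div_integral_greenPneg_of_neg {T ρ : ℝ} (hT : 0 ≤ T)
    (h : ρ * sin (ρ * T / 2) < 0) :
    (∫ s in (0 : ℝ)..T, GreenPpos T ρ 0 s) / (∫ s in (0 : ℝ)..T, GreenPneg T ρ 0 s) =
      (∫ u in -(ρ * T / 2)..ρ * T / 2, max (-cos u) 0) /
        ∫ u in -(ρ * T / 2)..ρ * T / 2, max (cos u) 0 := by
  have hρ : ρ ≠ 0 := by rintro rfl; simp at h
  have hd : 0 < -(2 * ρ * sin (ρ * T / 2)) := by linarith
  have hmax : ∀ x, max (x / (2 * ρ * sin (ρ * T / 2))) 0 =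
      max (-x) 0 / -(2 * ρ * sin (ρ * T / 2)) := fun x => by
    rw [← max_div_div_right hd.le, zero_div, neg_div_neg_eq]
  unfold GreenPpos GreenPneg
  rw [integral_comp_greenP_zero (fun x => max x 0) hT hρ,
    integral_comp_greenP_zero (fun x => max (-x) 0) hT hρ]
  simp only [← neg_div, hmax, neg_neg, integral_div]
  rw [mul_div_mul_left _ _ (inv_ne_zero hρ), div_div_div_cancel_right₀ hd.ne']

theorem periodic_gamma_cases_1B_1A (T : ℝ) (hT : 0 < T) (k : ℕ) (hk : 0 < k) (ρ : ℝ) :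
    ((4 * k - 1) * π / T < ρ → ρ < 4 * k * π / T →
      (∫ s in (0 : ℝ)..T, GreenPpos T ρ 0 s) / (∫ s in (0 : ℝ)..T, GreenPneg T ρ 0 s) =
        2 * k / (2 * k + sin (ρ * T / 2))) ∧
    (4 * k * π / T < ρ → ρ < (4 * k + 1) * π / T →
      (∫ s in (0 : ℝ)..T, GreenPpos T ρ 0 s) / (∫ s in (0 : ℝ)..T, GreenPneg T ρ 0 s) =
        (2 * k + sin (ρ * T / 2)) / (2 * k)) := by
  have hk' : (1 : ℝ) ≤ k := by exact_mod_cast hk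
  have hπ := pi_pos
  have hsin := neg_one_le_sin (ρ * T / 2)
  constructor
  · intro h₁ h₂
    rw [div_lt_iff₀ hT] at h₁
    rw [lt_div_iff₀ hT] at h₂
    have hθ : |ρ * T / 2 - 2 * k * π| ≤ π / 2 := abs_le.2 ⟨by linarith, by linarith⟩
    have hρ : 0 < ρ := pos_of_mul_pos_left (by nlinarith) hT.le
    have hs : sin (ρ * T / 2) < 0 := by
      rw [← sin_sub_nat_mul_two_pi _ k]
      exact sin_neg_of_neg_of_neg_pi_lt (by linarith) (by linarith)
    rw [integral_greenPpos_div_integral_greenPneg_of_neg hT.le (mul_neg_of_pos_of_neg hρ hs),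
      integral_posPart_cos_of_abs_sub_le k hθ, integral_negPart_cos_of_abs_sub_le k hθ,
      div_eq_div_iff (by linarith) (by linarith)]
    ring
  · intro h₁ h₂
    rw [div_lt_iff₀ hT] at h₁
    rw [lt_div_iff₀ hT] at h₂
    have hθ : |ρ * T / 2 - 2 * k * π| ≤ π / 2 := abs_le.2 ⟨by linarith, by linarith⟩
    have hρ : 0 < ρ := pos_of_mul_pos_left (by nlinarith) hT.le
    have hs : 0 < sin (ρ * T / 2) := by
      rw [← sin_sub_nat_mul_two_pi _ k]
      exact sin_pos_of_pos_of_lt_pi (by linarith) (by linarith)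
    rw [integral_greenPpos_div_integral_greenPneg_of_pos hT.le (mul_pos hρ hs),
      integral_posPart_cos_of_abs_sub_le k hθ, integral_negPart_cos_of_abs_sub_le k hθ,
      div_eq_div_iff (by linarith) (by linarith)]
    ring
end

section
/- Let T > 0 and ρ > 0 with ρT not an integer multiple of π. (i) If ρ < π/T, then G_D(t,s) < 0 for all (t,s) ∈ (0,T) × (0,T). (ii) If ρ > π/T, then there exist points (t₁,s₁), (t₂,s₂) ∈ (0,T) × (0,T) with G_D(t₁,s₁) > 0 and G_D(t₂,s₂) < 0. -/
open Real Set

/-- The Green's function of the Dirichlet problem `u'' + ρ²u = 0`,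
`u(0) = u(T) = 0`. -/
noncomputable def GreenD (T ρ t s : ℝ) : ℝ :=
  if s ≤ t then -(sin (ρ * s) * sin (ρ * (T - t))) / (ρ * sin (ρ * T))
  else -(sin (ρ * t) * sin (ρ * (T - s))) / (ρ * sin (ρ * T))

/-!
For `ρT < π` both factors `sin (ρ s)`, `sin (ρ (T - t))` and the denominator `ρ sin (ρT)` are
positive. For `ρT > π` it suffices to look at the diagonal, where by the product-to-sum formula
`G(t, t) = (cos (ρT) - cos (ρ (2t - T))) / (2ρ sin (ρT))`. At `t = T/2` and at `t = (T + π/ρ)/2`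
the numerators are `cos (ρT) - 1` and `cos (ρT) + 1`, so the product of the two values is
`-sin² (ρT) / (4ρ² sin² (ρT)) = -1/(4ρ²) < 0`, and the two values have opposite signs.
-/

lemma GreenD_comm (T ρ t s : ℝ) : GreenD T ρ t s = GreenD T ρ s t := by
  unfold GreenD
  rcases lt_trichotomy s t with hst | rfl | hts
  · rw [if_pos hst.le, if_neg hst.not_ge]
  · rfl
  · rw [if_neg hts.not_ge, if_pos hts.le]

lemma sin_mul_pos_of_mem_Ioo {T ρ x : ℝ} (hρ : 0 < ρ) (hρT : ρ * T ≤ π) (hx : x ∈ Ioo 0 T) :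
    0 < sin (ρ * x) :=
  sin_pos_of_pos_of_lt_pi (mul_pos hρ hx.1) (by nlinarith [hx.2])

lemma GreenD_neg_of_le {T ρ t s : ℝ} (hρ : 0 < ρ) (hρT : ρ * T < π) (hT : 0 < T)
    (ht : t ∈ Ioo 0 T) (hs : s ∈ Ioo 0 T) (hst : s ≤ t) : GreenD T ρ t s < 0 := by
  have hTt : T - t ∈ Ioo 0 T := ⟨sub_pos.2 ht.2, sub_lt_self T ht.1⟩
  rw [GreenD, if_pos hst, neg_div]
  refine neg_neg_of_pos (div_pos ?_ (mul_pos hρ (sin_pos_of_pos_of_lt_pi (by positivity) hρT)))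
  exact mul_pos (sin_mul_pos_of_mem_Ioo hρ hρT.le hs) (sin_mul_pos_of_mem_Ioo hρ hρT.le hTt)

lemma GreenD_self (T ρ t : ℝ) :
    GreenD T ρ t t = (cos (ρ * T) - cos (ρ * (2 * t - T))) / (2 * (ρ * sin (ρ * T))) := by
  have h := two_mul_sin_mul_sin (ρ * t) (ρ * (T - t))
  rw [show ρ * t - ρ * (T - t) = ρ * (2 * t - T) by ring,
    show ρ * t + ρ * (T - t) = ρ * T by ring] at h
  rw [GreenD, if_pos le_rfl, ← neg_sub (cos _), ← h, neg_div, neg_div, mul_assoc,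
    mul_div_mul_left _ _ two_ne_zero]

lemma GreenD_self_mul_GreenD_self {T ρ : ℝ} (hρ : ρ ≠ 0) (hsin : sin (ρ * T) ≠ 0) :
    GreenD T ρ (T / 2) (T / 2) * GreenD T ρ ((T + π / ρ) / 2) ((T + π / ρ) / 2)
      = -1 / (4 * ρ ^ 2) := by
  rw [GreenD_self, GreenD_self, show ρ * (2 * (T / 2) - T) = 0 by ring,
    show ρ * (2 * ((T + π / ρ) / 2) - T) = π by field_simp; ring, cos_zero, cos_pi]
  have hcos : (cos (ρ * T) - 1) * (cos (ρ * T) - -1) = -sin (ρ * T) ^ 2 := by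
    nlinarith [sin_sq_add_cos_sq (ρ * T)]
  rw [div_mul_div_comm, hcos]
  field_simp
  ring

theorem dirichlet_green_sign (T ρ : ℝ) (hT : 0 < T) (hρ : 0 < ρ)
    (hres : ∀ n : ℤ, ρ * T ≠ n * π) :
    (ρ < π / T → ∀ t ∈ Ioo 0 T, ∀ s ∈ Ioo 0 T, GreenD T ρ t s < 0) ∧
    (π / T < ρ →
      (∃ t₁ ∈ Ioo 0 T, ∃ s₁ ∈ Ioo 0 T, 0 < GreenD T ρ t₁ s₁) ∧
      (∃ t₂ ∈ Ioo 0 T, ∃ s₂ ∈ Ioo 0 T, GreenD T ρ t₂ s₂ < 0)) := by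
  constructor
  · intro hlt t ht s hs
    have hρT : ρ * T < π := (lt_div_iff₀ hT).1 hlt
    rcases le_total s t with hst | hts
    · exact GreenD_neg_of_le hρ hρT hT ht hs hst
    · rw [GreenD_comm]
      exact GreenD_neg_of_le hρ hρT hT hs ht hts
  · intro hgt
    have hπρ : π / ρ < T := (div_lt_iff₀ hρ).2 (by linarith [(div_lt_iff₀ hT).1 hgt])
    have hsin : sin (ρ * T) ≠ 0 := sin_ne_zero_iff.2 fun n h => hres n h.symm
    have hmid : T / 2 ∈ Ioo 0 T := ⟨by positivity, by linarith⟩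
    have hshift : (T + π / ρ) / 2 ∈ Ioo 0 T := ⟨by positivity, by linarith⟩
    have hprod : GreenD T ρ (T / 2) (T / 2) * GreenD T ρ ((T + π / ρ) / 2) ((T + π / ρ) / 2)
        < 0 := by
      rw [GreenD_self_mul_GreenD_self hρ.ne' hsin]
      exact div_neg_of_neg_of_pos (by norm_num) (by positivity)
    rcases mul_neg_iff.1 hprod with ⟨hpos, hneg⟩ | ⟨hneg, hpos⟩
    · exact ⟨⟨_, hmid, _, hmid, hpos⟩, ⟨_, hshift, _, hshift, hneg⟩⟩
    · exact ⟨⟨_, hshift, _, hshift, hpos⟩, ⟨_, hmid, _, hmid, hneg⟩⟩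
end

section
/- If u : [0,1] → ℝ is twice continuously differentiable and satisfies u''(t) + 60·u(t) = t·(1−t) for all t ∈ [0,1] with u(0) = u(1) = 0, then u(t) > 0 for all t ∈ (0,1). Moreover, such a function u exists and is unique. -/
/-!
Write `ω = √60`. The solution is explicit,
`u t = (t - t²) / ω² + 2 / ω⁴ * (1 - cos (ω (t - 1/2)) / cos (ω / 2))`,
and `cos_sub_cos` turns it into `(4 / ω⁴) (x y - sin x sin y / cos (x + y))`
with `x = ω t / 2`, `y = ω (1 - t) / 2`. As `x + y = ω / 2 ∈ [2π/3, 4π/3]`, `cos (x + y) ≤ -1/2`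
and positivity amounts to `cos (x + y) * x y < sin x sin y`: clear when `x, y ≤ π`, and if, say,
`x > π` then
`sin x sin y ≥ -y > -π y / 2 ≥ cos (x + y) * x y`.

Uniqueness holds because `sin ω ≠ 0`: a solution `w` of the homogeneous problem, corrected by a
multiple of `sin (ω t)`, has zero initial data, hence vanishes by conservation of the energy
`ω² w² + w'²`; evaluating at `t = 1` then kills the correction.
-/

open Real Set

lemma cos_le_neg_half {z : ℝ} (h₁ : 2 * π / 3 ≤ z) (h₂ : z ≤ 4 * π / 3) :
    cos z ≤ -1 / 2 := by
  have h : cos (π / 3) ≤ cos |z - π| :=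
    cos_le_cos_of_nonneg_of_le_pi (abs_nonneg _) (by linarith [pi_pos])
      (abs_le.mpr ⟨by linarith, by linarith⟩)
  rw [cos_abs, cos_sub_pi, cos_pi_div_three] at h
  linarith

lemma cos_add_mul_mul_lt_sin_mul_sin {x y : ℝ} (hx : 0 < x) (hy : 0 < y)
    (h₁ : 2 * π / 3 ≤ x + y) (h₂ : x + y ≤ 4 * π / 3) :
    cos (x + y) * (x * y) < sin x * sin y := by
  wlog hyx : y ≤ x generalizing x y
  · simpa only [add_comm, mul_comm] using this hy hx (by linarith) (by linarith) (by linarith)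
  have hcos := cos_le_neg_half h₁ h₂
  rcases le_or_gt x π with hxπ | hπx
  · have := mul_nonneg (sin_nonneg_of_nonneg_of_le_pi hx.le hxπ)
      (sin_nonneg_of_nonneg_of_le_pi hy.le (hyx.trans hxπ))
    nlinarith [mul_pos hx hy]
  · have hsy : 0 ≤ sin y := sin_nonneg_of_nonneg_of_le_pi hy.le (by linarith)
    calc cos (x + y) * (x * y) ≤ -(π / 2) * y := by
          nlinarith [mul_nonpos_of_nonpos_of_nonneg (by linarith : cos (x + y) + 1 / 2 ≤ 0)
            (mul_pos hx hy).le, mul_pos (sub_pos.mpr hπx) hy]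
      _ < -y := by nlinarith [pi_gt_three]
      _ ≤ -sin y := neg_le_neg (sin_le hy.le)
      _ ≤ sin x * sin y := by nlinarith [neg_one_le_sin x]

lemma hasDerivAt_mul_sub (ω a t : ℝ) : HasDerivAt (fun s ↦ ω * (s - a)) ω t := by
  simpa only [mul_one] using ((hasDerivAt_id' t).sub_const a).const_mul ω

lemma deriv_sin_mul_sub (ω a : ℝ) :
    deriv (fun s ↦ sin (ω * (s - a))) = fun s ↦ cos (ω * (s - a)) * ω :=
  funext fun s ↦ (hasDerivAt_mul_sub ω a s).sin.deriv

lemma deriv_deriv_sin_mul_sub (ω a t : ℝ) :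
    deriv (deriv fun s ↦ sin (ω * (s - a))) t = -ω ^ 2 * sin (ω * (t - a)) := by
  rw [deriv_sin_mul_sub, ((hasDerivAt_mul_sub ω a t).cos.mul_const ω).deriv]
  ring

lemma deriv_deriv_sub {f g : ℝ → ℝ} (hf : ContDiff ℝ 2 f) (hg : ContDiff ℝ 2 g) (t : ℝ) :
    deriv (deriv fun s ↦ f s - g s) t = deriv (deriv f) t - deriv (deriv g) t := by
  have hf₁ := hf.differentiable two_ne_zero
  have hg₁ := hg.differentiable two_ne_zero
  rw [show deriv (fun s ↦ f s - g s) = fun s ↦ deriv f s - deriv g s from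
    funext fun s ↦ deriv_sub (hf₁ s) (hg₁ s)]
  exact deriv_sub (hf.differentiable_deriv_two t) (hg.differentiable_deriv_two t)

lemma eqOn_zero_of_deriv_deriv_add_mul_eq_zero {k a b : ℝ} (hk : 0 < k) {w : ℝ → ℝ}
    (hw : ContDiff ℝ 2 w) (hode : ∀ t ∈ Icc a b, deriv (deriv w) t + k * w t = 0)
    (ha : w a = 0) (ha' : deriv w a = 0) : EqOn w 0 (Icc a b) := by
  have hw₁ : Differentiable ℝ w := hw.differentiable two_ne_zero
  have hw₂ : Differentiable ℝ (deriv w) := hw.differentiable_deriv_two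
  set E : ℝ → ℝ := fun t ↦ k * w t ^ 2 + deriv w t ^ 2
  have hE : ∀ t ∈ Ico a b, HasDerivWithinAt E 0 (Ici t) t := by
    intro t ht
    have h := (((hw₁ t).hasDerivAt.pow 2).const_mul k).add ((hw₂ t).hasDerivAt.pow 2)
    refine (h.congr_deriv ?_).hasDerivWithinAt
    linear_combination (2 * deriv w t) * hode t (Ico_subset_Icc_self ht)
  have hE_const := constant_of_has_deriv_right_zero
    (((hw₁.continuous.pow 2).const_mul k).add (hw₂.continuous.pow 2)).continuousOn hE
  intro t ht
  have h : k * w t ^ 2 + deriv w t ^ 2 = k * w a ^ 2 + deriv w a ^ 2 := hE_const t ht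
  rw [ha, ha'] at h
  exact pow_eq_zero_iff two_ne_zero |>.mp (by nlinarith [sq_nonneg (w t), sq_nonneg (deriv w t)])

lemma eqOn_zero_of_dirichlet {ω a b : ℝ} (hω : sin (ω * (b - a)) ≠ 0) {w : ℝ → ℝ}
    (hw : ContDiff ℝ 2 w) (hode : ∀ t ∈ Icc a b, deriv (deriv w) t + ω ^ 2 * w t = 0)
    (ha : w a = 0) (hb : w b = 0) : EqOn w 0 (Icc a b) := by
  intro t ht
  have hω₀ : ω ≠ 0 := by rintro rfl; simp at hω
  set c := deriv w a / ω
  have hs : ContDiff ℝ 2 fun t ↦ c * sin (ω * (t - a)) := by fun_prop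
  have hg : EqOn (fun t ↦ w t - c * sin (ω * (t - a))) 0 (Icc a b) := by
    refine eqOn_zero_of_deriv_deriv_add_mul_eq_zero (pow_two_pos_of_ne_zero hω₀) (hw.sub hs)
      (fun t ht ↦ ?_) (by simp [ha]) ?_
    · rw [deriv_deriv_sub hw hs, deriv_const_mul_field', deriv_const_mul_field,
        deriv_deriv_sin_mul_sub]
      linear_combination hode t ht
    · rw [deriv_fun_sub (hw.differentiable two_ne_zero a) (hs.differentiable two_ne_zero a),
        deriv_const_mul_field', deriv_sin_mul_sub]
      simp [c, hω₀]
  have hc : c = 0 := by simpa [hb, hω] using hg (right_mem_Icc.mpr (ht.1.trans ht.2))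
  simpa [hc] using hg ht

lemma eqOn_of_dirichlet {ω a b : ℝ} (hω : sin (ω * (b - a)) ≠ 0) {f u v : ℝ → ℝ}
    (hu : ContDiff ℝ 2 u) (hv : ContDiff ℝ 2 v)
    (hu' : ∀ t ∈ Icc a b, deriv (deriv u) t + ω ^ 2 * u t = f t)
    (hv' : ∀ t ∈ Icc a b, deriv (deriv v) t + ω ^ 2 * v t = f t)
    (ha : u a = v a) (hb : u b = v b) : EqOn u v (Icc a b) := by
  intro t ht
  refine sub_eq_zero.mp (eqOn_zero_of_dirichlet hω (hu.sub hv) (fun t ht ↦ ?_)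
    (sub_eq_zero.mpr ha) (sub_eq_zero.mpr hb) ht)
  rw [deriv_deriv_sub hu hv]
  linear_combination hu' t ht - hv' t ht

noncomputable def dirichletSolution (ω t : ℝ) : ℝ :=
  (t - t ^ 2) / ω ^ 2 + 2 / ω ^ 4 * (1 - cos (ω * (t - 1 / 2)) / cos (ω / 2))

lemma contDiff_dirichletSolution (ω : ℝ) : ContDiff ℝ 2 (dirichletSolution ω) := by
  unfold dirichletSolution; fun_prop

lemma hasDerivAt_dirichletSolution (ω t : ℝ) :
    HasDerivAt (dirichletSolution ω)
      ((1 - 2 * t) / ω ^ 2 + 2 / ω ^ 4 * (ω * sin (ω * (t - 1 / 2)) / cos (ω / 2))) t := by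
  have h := ((((hasDerivAt_id t).sub (hasDerivAt_pow 2 t)).div_const (ω ^ 2)).add
    ((((hasDerivAt_mul_sub ω (1 / 2) t).cos.div_const (cos (ω / 2))).const_sub 1).const_mul
      (2 / ω ^ 4)))
  exact h.congr_deriv (by simp only [Nat.cast_ofNat, Nat.add_one_sub_one, pow_one]; ring)

lemma deriv_deriv_dirichletSolution (ω t : ℝ) :
    deriv (deriv (dirichletSolution ω)) t =
      -2 / ω ^ 2 + 2 / ω ^ 4 * (ω ^ 2 * cos (ω * (t - 1 / 2)) / cos (ω / 2)) := by
  rw [funext fun t ↦ (hasDerivAt_dirichletSolution ω t).deriv]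
  have h := ((((hasDerivAt_id t).const_mul 2).const_sub 1).div_const (ω ^ 2)).add
    ((((hasDerivAt_mul_sub ω (1 / 2) t).sin.const_mul ω).div_const (cos (ω / 2))).const_mul
      (2 / ω ^ 4))
  exact (h.congr_deriv (by ring)).deriv

lemma deriv_deriv_dirichletSolution_add {ω : ℝ} (hω : ω ≠ 0) (t : ℝ) :
    deriv (deriv (dirichletSolution ω)) t + ω ^ 2 * dirichletSolution ω t = t * (1 - t) := by
  rw [deriv_deriv_dirichletSolution, dirichletSolution]
  field_simp
  ring

lemma dirichletSolution_apply_zero {ω : ℝ} (hc : cos (ω / 2) ≠ 0) :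
    dirichletSolution ω 0 = 0 := by
  have h : ω * (0 - 1 / 2) = -(ω / 2) := by ring
  rw [dirichletSolution, h, cos_neg, div_self hc]
  ring

lemma dirichletSolution_apply_one {ω : ℝ} (hc : cos (ω / 2) ≠ 0) :
    dirichletSolution ω 1 = 0 := by
  have h : ω * (1 - 1 / 2) = ω / 2 := by ring
  rw [dirichletSolution, h, div_self hc]
  ring

lemma dirichletSolution_eq_sub_sin_mul_sin {ω : ℝ} (hc : cos (ω / 2) ≠ 0) (t : ℝ) :
    dirichletSolution ω t = (t - t ^ 2) / ω ^ 2 -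
      4 / ω ^ 4 * (sin (ω * t / 2) * sin (ω * (1 - t) / 2) / cos (ω / 2)) := by
  have hsum : (ω / 2 + ω * (t - 1 / 2)) / 2 = ω * t / 2 := by ring
  have hdiff : (ω / 2 - ω * (t - 1 / 2)) / 2 = ω * (1 - t) / 2 := by ring
  rw [dirichletSolution, one_sub_div hc, cos_sub_cos, hsum, hdiff]
  ring

lemma dirichletSolution_pos {ω : ℝ} (hω : ω / 2 ∈ Icc (2 * π / 3) (4 * π / 3)) {t : ℝ}
    (ht : t ∈ Ioo 0 1) : 0 < dirichletSolution ω t := by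
  have hω₀ : 0 < ω := by linarith [hω.1, pi_pos]
  have hc : cos (ω / 2) < 0 := by linarith [cos_le_neg_half hω.1 hω.2]
  have hsum : ω * t / 2 + ω * (1 - t) / 2 = ω / 2 := by ring
  have key := cos_add_mul_mul_lt_sin_mul_sin (x := ω * t / 2) (y := ω * (1 - t) / 2)
    (by nlinarith [ht.1]) (by nlinarith [ht.2]) (hsum ▸ hω.1) (hsum ▸ hω.2)
  rw [hsum] at key
  have h : sin (ω * t / 2) * sin (ω * (1 - t) / 2) / cos (ω / 2) < ω ^ 2 * (t - t ^ 2) / 4 :=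
    (div_lt_iff_of_neg hc).mpr (by linarith)
  rw [dirichletSolution_eq_sub_sin_mul_sin hc.ne, sub_pos]
  calc 4 / ω ^ 4 * (sin (ω * t / 2) * sin (ω * (1 - t) / 2) / cos (ω / 2))
      < 4 / ω ^ 4 * (ω ^ 2 * (t - t ^ 2) / 4) := by gcongr
    _ = (t - t ^ 2) / ω ^ 2 := by field_simp

lemma sqrt_sixty_div_two_mem : √60 / 2 ∈ Ioo π (4 * π / 3) := by
  constructor
  · have : 2 * π < √60 := (lt_sqrt (by positivity)).mpr (by nlinarith [pi_lt_d2, pi_pos])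
    linarith
  · have : √60 < 8 * π / 3 := (sqrt_lt' (by positivity)).mpr (by nlinarith [pi_gt_three])
    linarith

theorem dirichlet_example_positive_solution :
    (∀ u : ℝ → ℝ, ContDiff ℝ 2 u →
      (∀ t ∈ Icc (0 : ℝ) 1, deriv (deriv u) t + 60 * u t = t * (1 - t)) →
      u 0 = 0 → u 1 = 0 → ∀ t ∈ Ioo (0 : ℝ) 1, 0 < u t) ∧
    (∃ u : ℝ → ℝ, ContDiff ℝ 2 u ∧
      (∀ t ∈ Icc (0 : ℝ) 1, deriv (deriv u) t + 60 * u t = t * (1 - t)) ∧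
      u 0 = 0 ∧ u 1 = 0) ∧
    (∀ u v : ℝ → ℝ, ContDiff ℝ 2 u → ContDiff ℝ 2 v →
      (∀ t ∈ Icc (0 : ℝ) 1, deriv (deriv u) t + 60 * u t = t * (1 - t)) →
      (∀ t ∈ Icc (0 : ℝ) 1, deriv (deriv v) t + 60 * v t = t * (1 - t)) →
      u 0 = 0 → u 1 = 0 → v 0 = 0 → v 1 = 0 →
      ∀ t ∈ Icc (0 : ℝ) 1, u t = v t) := by
  have hω : √60 ^ 2 = 60 := sq_sqrt (by norm_num)
  have hω₀ : √60 ≠ 0 := by positivity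
  obtain ⟨hπ_lt, hlt⟩ := sqrt_sixty_div_two_mem
  have hω_mem : √60 / 2 ∈ Icc (2 * π / 3) (4 * π / 3) := ⟨by linarith [pi_pos], hlt.le⟩
  have hcos : cos (√60 / 2) ≠ 0 := by linarith [cos_le_neg_half hω_mem.1 hω_mem.2]
  have hsin : sin (√60 * (1 - 0)) ≠ 0 := by
    rw [sub_zero, mul_one, ← sin_sub_two_pi]
    exact (sin_pos_of_pos_of_lt_pi (by linarith) (by linarith)).ne'
  have hode (t : ℝ) (_ : t ∈ Icc (0 : ℝ) 1) := deriv_deriv_dirichletSolution_add hω₀ t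
  refine ⟨fun u hu hu' hu₀ hu₁ t ht ↦ ?_, ⟨_, contDiff_dirichletSolution _,
    by simpa only [hω] using hode, dirichletSolution_apply_zero hcos,
    dirichletSolution_apply_one hcos⟩,
    fun u v hu hv hu' hv' hu₀ hu₁ hv₀ hv₁ ↦ eqOn_of_dirichlet hsin hu hv (by rwa [hω])
      (by rwa [hω]) (hu₀.trans hv₀.symm) (hu₁.trans hv₁.symm)⟩
  have h := eqOn_of_dirichlet hsin hu (contDiff_dirichletSolution _) (by rwa [hω]) hode
    (hu₀.trans (dirichletSolution_apply_zero hcos).symm)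
    (hu₁.trans (dirichletSolution_apply_one hcos).symm) (Ioo_subset_Icc_self ht)
  exact h ▸ dirichletSolution_pos hω_mem ht
end
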